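/- arXiv:1903.05888 — 2 statements merged into one kernel-verified Lean document; each statement's English description precedes it below -/
import Mathlib

section
/- A differentiable vector field v : Ω → ℝ^d on a connected open set Ω satisfies ∇v(x) F(x)^{-1} skew-symmetric and constant (i.e. ∇v = J(θ) F for a fixed θ) together with v being affine in the rigid-body sense if and only if v ∈ RM(u), the span of constants together with the rotated modes x ↦ J(eᵢ)(x + u(x)): concretely, in d = 2, if ∇v(x) = γ(x) J(1) F(u)(x) with γ constant, then v(x) = a + γ (x₂+u₂(x), -(x₁+u₁(x))) for some a ∈ ℝ² and γ ∈ ℝ. -/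
open Matrix

lemma const_on_of_fderiv_zero {E F : Type*} [NormedAddCommGroup E] [NormedSpace ℝ E]
    [NormedAddCommGroup F] [NormedSpace ℝ F] {Ω : Set E} (hΩo : IsOpen Ω)
    (hΩc : IsPreconnected Ω) {g : E → F}
    (hg : ∀ x ∈ Ω, DifferentiableAt ℝ g x)
    (hg' : ∀ x ∈ Ω, fderiv ℝ g x = 0) :
    ∀ x ∈ Ω, ∀ y ∈ Ω, g x = g y := by
  have hloc : ∀ x ∈ Ω, ∀ᶠ z in nhds x, g z = g x := by
    intro x hx
    obtain ⟨ε, hε, hball⟩ := Metric.isOpen_iff.1 hΩo x hx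
    filter_upwards [Metric.ball_mem_nhds x hε] with z hz
    exact (convex_ball x ε).is_const_of_fderivWithin_eq_zero
      (fun w hw => (hg w (hball hw)).differentiableWithinAt)
      (fun w hw => by rw [fderivWithin_of_isOpen Metric.isOpen_ball hw]; exact hg' w (hball hw))
      hz (Metric.mem_ball_self hε)
  intro x hx y hy
  by_contra hne
  set S : Set E := {z | z ∈ Ω ∧ g z = g x} with hS
  set T : Set E := {z | z ∈ Ω ∧ g z ≠ g x} with hT
  have hSo : IsOpen S := by
    rw [isOpen_iff_mem_nhds]
    rintro z ⟨hzΩ, hzg⟩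
    filter_upwards [hloc z hzΩ, hΩo.mem_nhds hzΩ] with w hw hwΩ
    exact ⟨hwΩ, hw.trans hzg⟩
  have hTo : IsOpen T := by
    rw [isOpen_iff_mem_nhds]
    rintro z ⟨hzΩ, hzg⟩
    filter_upwards [hloc z hzΩ, hΩo.mem_nhds hzΩ] with w hw hwΩ
    exact ⟨hwΩ, hw.symm ▸ hzg⟩
  obtain ⟨z, hzΩ, ⟨_, h1⟩, ⟨_, h2⟩⟩ :=
    hΩc S T hSo hTo (fun z hz => by by_cases hc : g z = g x
                                    · exact Or.inl ⟨hz, hc⟩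
                                    · exact Or.inr ⟨hz, hc⟩)
      ⟨x, hx, hx, rfl⟩ ⟨y, hy, hy, fun hc => hne hc.symm⟩
  exact h2 h1

/-- The Jacobian matrix of a vector field on `ℝ²`: `(jac2 f x) i j = ∂fᵢ/∂xⱼ (x)`. -/
noncomputable def jac2 (f : (Fin 2 → ℝ) → (Fin 2 → ℝ)) (x : Fin 2 → ℝ) :
    Matrix (Fin 2) (Fin 2) ℝ :=
  Matrix.of fun i j => fderiv ℝ f x (Pi.single j 1) i

/-- In 2D, on a connected open set `Ω`: if a differentiable vector field `v` satisfies
`∇v(x) = γ J(1) F(u)(x)` for all `x ∈ Ω` with a constant `γ`, then `v` is a rigid body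
mode of the deformed configuration: `v(x) = a + γ (x₂ + u₂(x), -(x₁ + u₁(x)))` on `Ω`
for some constant `a ∈ ℝ²`. -/
theorem rigid_body_mode_characterization
    (Ω : Set (Fin 2 → ℝ)) (hΩo : IsOpen Ω) (hΩc : IsConnected Ω)
    (u v : (Fin 2 → ℝ) → (Fin 2 → ℝ))
    (hu : ∀ x ∈ Ω, DifferentiableAt ℝ u x)
    (hv : ∀ x ∈ Ω, DifferentiableAt ℝ v x)
    (γ : ℝ)
    (h : ∀ x ∈ Ω, jac2 v x = γ • (!![0, 1; -1, 0] * (1 + jac2 u x))) :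
    ∃ a : Fin 2 → ℝ, ∀ x ∈ Ω,
      v x = a + γ • ![x 1 + u x 1, -(x 0 + u x 0)] := by
  set M : Matrix (Fin 2) (Fin 2) ℝ := !![0, 1; -1, 0] with hM
  set L : (Fin 2 → ℝ) →L[ℝ] (Fin 2 → ℝ) :=
    LinearMap.toContinuousLinearMap (Matrix.mulVecLin M) with hL
  set w : (Fin 2 → ℝ) → (Fin 2 → ℝ) := fun x => L (x + u x) with hwdef
  have hwx : ∀ x, w x = ![x 1 + u x 1, -(x 0 + u x 0)] := by
    intro x
    funext i
    fin_cases i <;>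
      simp [hwdef, hL, hM, Matrix.mulVecLin, Matrix.mulVec, dotProduct,
        Fin.sum_univ_two] <;> ring
  set g : (Fin 2 → ℝ) → (Fin 2 → ℝ) := fun x => v x - γ • w x with hgdef
  have hwd : ∀ x ∈ Ω, HasFDerivAt w
      (L.comp (ContinuousLinearMap.id ℝ _ + fderiv ℝ u x)) x := by
    intro x hx
    exact L.hasFDerivAt.comp x ((hasFDerivAt_id x).add (hu x hx).hasFDerivAt)
  have key : ∀ x ∈ Ω, fderiv ℝ v x =
      γ • (L.comp (ContinuousLinearMap.id ℝ _ + fderiv ℝ u x)) := by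
    intro x hx
    have hmat := h x hx
    refine ContinuousLinearMap.coe_injective ((Pi.basisFun ℝ (Fin 2)).ext fun j => ?_)
    have hj : (Pi.basisFun ℝ (Fin 2)) j = Pi.single j 1 := by
      simp [Pi.basisFun_apply]
    rw [hj]
    simp only [ContinuousLinearMap.coe_coe]
    funext i
    have hent : jac2 v x i j = γ * ((M * (1 + jac2 u x)) i j) := by
      have := congrFun (congrFun hmat i) j
      simpa using this
    have hjac : fderiv ℝ v x (Pi.single j 1) i = jac2 v x i j := rfl
    fin_cases i <;> fin_cases j <;>
      · rw [hjac, hent]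
        simp [hM, Matrix.mul_apply, Fin.sum_univ_two, hL, Matrix.mulVecLin,
          Matrix.mulVec, dotProduct, jac2, Matrix.vecHead, Matrix.vecTail,
          Pi.smul_apply, smul_eq_mul, Matrix.smul_apply]
        try ring
  have hgd : ∀ x ∈ Ω, HasFDerivAt g (0 : (Fin 2 → ℝ) →L[ℝ] (Fin 2 → ℝ)) x := by
    intro x hx
    have h2 : HasFDerivAt (fun y => γ • w y)
        (γ • (L.comp (ContinuousLinearMap.id ℝ _ + fderiv ℝ u x))) x :=
      (hwd x hx).const_smul γ
    have : HasFDerivAt g (fderiv ℝ v x -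
        γ • (L.comp (ContinuousLinearMap.id ℝ _ + fderiv ℝ u x))) x :=
      (hv x hx).hasFDerivAt.sub h2
    rwa [key x hx, sub_self] at this
  have hconst := const_on_of_fderiv_zero hΩo hΩc.isPreconnected
    (fun x hx => (hgd x hx).differentiableAt)
    (fun x hx => (hgd x hx).fderiv) 
  obtain ⟨x₀, hx₀⟩ := hΩc.nonempty
  refine ⟨g x₀, fun x hx => ?_⟩
  have := hconst x hx x₀ hx₀
  rw [← hwx x, ← this]
  simp [hgdef]
end

section
/- If Q = P - P_h^R satisfies div Q = 0 in Ω, Q·n = 0 on Γ_N, (Q F(u_h)^T) is weakly symmetric (orthogonal in L² to all fields J(γ) with γ in the test space), and v ∈ RM(u_h) is a rigid body mode of the deformed configuration with constant rotation, then ⟨Q·n, v⟩_{Γ_D} = 0. -/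
open Matrix MeasureTheory

/-- Frobenius inner product of matrices. -/
def frob {d : ℕ} (A B : Matrix (Fin d) (Fin d) ℝ) : ℝ := (Aᵀ * B).trace

/-- Euclidean dot product. -/
def dotp {d : ℕ} (a b : Fin d → ℝ) : ℝ := ∑ i, a i * b i

/-- If `Q = P - P_h^R` satisfies `div Q = 0` in `Ω`, `Q·n = 0` on `Γ_N`, and
`Q F(u_h)ᵀ` is weakly symmetric (orthogonal in `L²` to all `J(θ)` with constant `θ`),
then for any rigid body mode `v` of the deformed configuration (i.e.
`∇v = J(θ) F(u_h)` with constant `θ`) one has `⟨Q·n, v⟩_{Γ_D} = 0`. -/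
theorem traction_pairing_vanishes_on_rigid_modes
    (μ σD σN : Measure (Fin 2 → ℝ))
    (Q : (Fin 2 → ℝ) → Matrix (Fin 2) (Fin 2) ℝ)
    (divQ : (Fin 2 → ℝ) → (Fin 2 → ℝ))
    (n u : (Fin 2 → ℝ) → (Fin 2 → ℝ))
    (hu : Differentiable ℝ u)
    (hdivthm : ∀ v : (Fin 2 → ℝ) → (Fin 2 → ℝ), Differentiable ℝ v →
      (∫ x, frob (Q x) (jac2 v x) ∂μ) + (∫ x, dotp (divQ x) (v x) ∂μ)
        = (∫ x, dotp (Q x *ᵥ n x) (v x) ∂σD) + (∫ x, dotp (Q x *ᵥ n x) (v x) ∂σN))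
    (hdiv0 : ∀ x, divQ x = 0)
    (hΓN : ∀ᵐ x ∂σN, Q x *ᵥ n x = 0)
    (hweaksym : ∀ θ : ℝ,
      ∫ x, frob (Q x * (1 + jac2 u x)ᵀ) !![0, θ; -θ, 0] ∂μ = 0)
    (v : (Fin 2 → ℝ) → (Fin 2 → ℝ)) (hv : Differentiable ℝ v) (θ : ℝ)
    (hrm : ∀ x, jac2 v x = !![0, θ; -θ, 0] * (1 + jac2 u x)) :
    ∫ x, dotp (Q x *ᵥ n x) (v x) ∂σD = 0 := by
  have key : ∀ x, frob (Q x) (jac2 v x)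
      = frob (Q x * (1 + jac2 u x)ᵀ) !![0, θ; -θ, 0] := by
    intro x
    rw [hrm x]
    simp only [frob]
    set A := Q x
    set F := (1 + jac2 u x)
    rw [show (A * Fᵀ)ᵀ = F * Aᵀ by rw [Matrix.transpose_mul, Matrix.transpose_transpose]]
    rw [← Matrix.mul_assoc, Matrix.trace_mul_comm (F * Aᵀ) !![0, θ; -θ, 0],
      Matrix.mul_assoc, Matrix.trace_mul_comm Aᵀ (!![0, θ; -θ, 0] * F),
      Matrix.mul_assoc]
  have h1 : ∫ x, frob (Q x) (jac2 v x) ∂μ = 0 := by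
    calc ∫ x, frob (Q x) (jac2 v x) ∂μ
        = ∫ x, frob (Q x * (1 + jac2 u x)ᵀ) !![0, θ; -θ, 0] ∂μ := by
          exact integral_congr_ae (Filter.Eventually.of_forall key)
      _ = 0 := hweaksym θ
  have h2 : ∫ x, dotp (divQ x) (v x) ∂μ = 0 := by
    have : ∀ x, dotp (divQ x) (v x) = 0 := by
      intro x; simp [dotp, hdiv0 x]
    simp [this]
  have h3 : ∫ x, dotp (Q x *ᵥ n x) (v x) ∂σN = 0 := by
    have : ∀ᵐ x ∂σN, dotp (Q x *ᵥ n x) (v x) = 0 := by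
      filter_upwards [hΓN] with x hx
      simp [dotp, hx]
    calc ∫ x, dotp (Q x *ᵥ n x) (v x) ∂σN = ∫ _x, (0:ℝ) ∂σN :=
          integral_congr_ae this
      _ = 0 := integral_zero _ _
  have := hdivthm v hv
  rw [h1, h2, h3] at this
  linarith
end
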